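/- arXiv:1402.6681 — 4 statements merged into one kernel-verified Lean document; each statement's English description precedes it below -/
import Mathlib

section
/- If there exists a nonempty open interval (a,b) ⊂ (1,∞) containing no Salem number, then the set of Salem numbers is bounded away from 1, i.e., there exists c > 1 such that every Salem number θ satisfies θ ≥ c. -/
/-! The conjugates of `θ ^ n` are exactly the `n`-th powers of the conjugates of `θ`, so the
powers of a Salem number are Salem numbers. If no Salem number lay in `(a, b)` with `1 < a`,
a Salem number `θ < b / a` would have consecutive powers `θ ^ k ≤ a < θ ^ (k + 1)`, and then
`θ ^ (k + 1) ≤ a θ < b` would be a Salem number in the gap. -/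

open Polynomial IntermediateField

/-- A Salem number: a real algebraic integer `θ > 1` all of whose Galois
conjugates other than `θ` itself have modulus at most `1`, with at least one
conjugate of modulus exactly `1`. -/
def IsSalem (θ : ℝ) : Prop :=
  1 < θ ∧ IsIntegral ℤ θ ∧
    (∀ z : ℂ, aeval z (minpoly ℚ θ) = 0 → z ≠ (θ : ℂ) → ‖z‖ ≤ 1) ∧
    (∃ z : ℂ, aeval z (minpoly ℚ θ) = 0 ∧ ‖z‖ = 1)

theorem aeval_minpoly_pow_pow_eq_zero {K E M : Type*} [Field K] [Ring E] [CommRing M]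
    [Algebra K E] [Algebra K M] {x : E} {w : M} (hw : aeval w (minpoly K x) = 0) (n : ℕ) :
    aeval (w ^ n) (minpoly K (x ^ n)) = 0 := by
  obtain ⟨q, hq⟩ := minpoly.dvd K x (p := (minpoly K (x ^ n)).comp (X ^ n))
    (by simp [aeval_comp])
  simpa [aeval_comp, hw] using congrArg (aeval w) hq

theorem exists_pow_eq_of_aeval_minpoly_pow_eq_zero {K E M : Type*} [Field K] [Field E] [Field M]
    [Algebra K E] [Algebra K M] [IsAlgClosed M] {x : E} (hx : IsIntegral K x) (n : ℕ) {z : M}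
    (hz : aeval z (minpoly K (x ^ n)) = 0) :
    ∃ w : M, aeval w (minpoly K x) = 0 ∧ w ^ n = z := by
  have hsplits : ∀ s ∈ ({x} : Set E),
      IsIntegral K s ∧ ((minpoly K s).map (algebraMap K M)).Splits := by
    rintro s rfl
    exact ⟨hx, IsAlgClosed.splits _⟩
  obtain ⟨φ, hφ⟩ := exists_algHom_adjoin_of_splits_of_aeval hsplits
    (pow_mem (mem_adjoin_simple_self K x) n) hz
  refine ⟨φ (AdjoinSimple.gen K x), ?_, by rw [← map_pow, ← hφ]; rfl⟩
  rw [aeval_algHom_apply, aeval_gen_minpoly, map_zero]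

theorem IsSalem.pow {θ : ℝ} (hθ : IsSalem θ) {n : ℕ} (hn : n ≠ 0) : IsSalem (θ ^ n) := by
  obtain ⟨hθ1, hint, hconj, z, hz, hz1⟩ := hθ
  refine ⟨one_lt_pow₀ hθ1 hn, hint.pow n, fun y hy hyθ ↦ ?_,
    ⟨z ^ n, aeval_minpoly_pow_pow_eq_zero hz n, by rw [norm_pow, hz1, one_pow]⟩⟩
  obtain ⟨w, hw, rfl⟩ := exists_pow_eq_of_aeval_minpoly_pow_eq_zero hint.tower_top n hy
  have hwθ : w ≠ θ := by
    rintro rfl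
    exact hyθ (Complex.ofReal_pow θ n).symm
  rw [norm_pow]
  exact pow_le_one₀ (norm_nonneg w) (hconj w hw hwθ)

/-- If some nonempty open subinterval of `(1, ∞)` contains no Salem number,
then the set of Salem numbers is bounded away from `1`. -/
theorem salem_bounded_away_of_gap
    (h : ∃ a b : ℝ, 1 < a ∧ a < b ∧ ∀ θ : ℝ, IsSalem θ → θ ∉ Set.Ioo a b) :
    ∃ c : ℝ, 1 < c ∧ ∀ θ : ℝ, IsSalem θ → c ≤ θ := by
  obtain ⟨a, b, ha, hab, hgap⟩ := h
  have ha0 : 0 < a := one_pos.trans ha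
  refine ⟨b / a, (one_lt_div ha0).2 hab, fun θ hθ ↦ ?_⟩
  by_contra! hθb
  obtain ⟨k, hk, hk1⟩ := exists_nat_pow_near ha.le hθ.1
  refine hgap _ (hθ.pow k.succ_ne_zero) ⟨hk1, ?_⟩
  calc θ ^ (k + 1) = θ ^ k * θ := pow_succ θ k
    _ ≤ a * θ := by gcongr; linarith [hθ.1]
    _ < a * (b / a) := by gcongr
    _ = b := mul_div_cancel₀ b ha0.ne'
end

section
/- Let T be an irreducible Salem polynomial of degree m ≥ 4 with dominant root β > 1, and let P ∈ ℝ[z] be an expansive polynomial of degree m satisfying (z-1)T(z) = zP(z) - P*(z). Then P(1/β)·T'(1/β) < 0 and P(β)·T'(β) > 0. -/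
/-!
Evaluating `(z - 1) T(z) = z P(z) - z^m P(1/z)` shows that the roots of `T` other than `0` and `1`
are closed under `t ↦ 1/t`. An irreducible `T` of degree at least `2` has no integer roots, so the
Salem condition leaves `1/β < β` as the only real roots of `T`, both simple since `T` is separable.
Writing `T = (z - 1/β)(z - β) W` with `W` of constant sign on `ℝ`, the value `T(-1)` has the sign of
`T'(β)` and the opposite sign of `T'(1/β)`. At `z = -1` the relation gives `P(-1) = T(-1)` (an odd
`m` would force `T(-1) = 0`), the expansive `P` keeps one sign on `[-1, 1]`, and at the root `β` the
relation gives `β P(β) = β^m P(1/β)`. So `P(1/β)`, `P(β)` and `T(-1)` all have the same sign.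
-/

open Polynomial

theorem mul_pos_of_mul_pos_of_mul_pos {α : Type*} [CommRing α] [LinearOrder α]
    [IsStrictOrderedRing α] {a b c : α} (hab : 0 < a * b) (hbc : 0 < b * c) : 0 < a * c := by
  refine pos_of_mul_pos_left (?_ : 0 < a * c * b ^ 2) (sq_nonneg b)
  calc 0 < a * b * (b * c) := mul_pos hab hbc
    _ = a * c * b ^ 2 := by ring

theorem IsPreconnected.mul_pos_of_forall_ne_zero {X α : Type*} [TopologicalSpace X] [Ring α]
    [LinearOrder α] [IsStrictOrderedRing α] [TopologicalSpace α] [OrderClosedTopology α]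
    {s : Set X} (hs : IsPreconnected s) {f : X → α} (hf : ContinuousOn f s)
    (hf0 : ∀ x ∈ s, f x ≠ 0) {x y : X} (hx : x ∈ s) (hy : y ∈ s) : 0 < f x * f y := by
  by_contra! h
  obtain ⟨z, hz, hz0⟩ : ∃ z ∈ s, f z = 0 := by
    rcases mul_nonpos_iff.mp h with ⟨hfx, hfy⟩ | ⟨hfx, hfy⟩
    · exact hs.intermediate_value hy hx hf ⟨hfy, hfx⟩
    · exact hs.intermediate_value hx hy hf ⟨hfx, hfy⟩
  exact hf0 z hz hz0

theorem Irreducible.separable_map_intCastRingHom {K : Type*} [Field K] [CharZero K] {T : ℤ[X]}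
    (hT : Irreducible T) (hdeg : T.natDegree ≠ 0) : (T.map (Int.castRingHom K)).Separable := by
  have hQ : Irreducible (T.map (Int.castRingHom ℚ)) :=
    (IsPrimitive.Int.irreducible_iff_irreducible_map_cast (hT.isPrimitive hdeg)).mp hT
  have := hQ.separable.map (f := algebraMap ℚ K)
  rwa [map_map, RingHom.ext_int ((algebraMap ℚ K).comp (Int.castRingHom ℚ))] at this

theorem Irreducible.not_isRoot_map_intCastRingHom {R : Type*} [Ring R] [CharZero R] {T : ℤ[X]}
    (hT : Irreducible T) (hdeg : T.natDegree ≠ 1) (c : ℤ) :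
    ¬(T.map (Int.castRingHom R)).IsRoot c := fun hc =>
  hT.not_isRoot_of_natDegree_ne_one hdeg (by simpa [eval_intCast_map] using hc)

namespace Polynomial

section Field

variable {K : Type*} [Field K]

theorem eval_reflect_of_ne_zero {p : K[X]} {N : ℕ} (hp : p.natDegree ≤ N) {x : K} (hx : x ≠ 0) :
    (p.reflect N).eval x = x ^ N * p.eval x⁻¹ := by
  let := invertibleOfNonzero (inv_ne_zero hx)
  have h := eval₂_reflect_mul_pow (RingHom.id K) x⁻¹ N p hp
  rw [invOf_eq_inv, inv_inv, ← eval, ← eval, inv_pow] at h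
  rw [← h]
  field_simp

theorem exists_eq_X_sub_C_mul_X_sub_C_mul {T : K[X]} {a b : K} (hab : a ≠ b) (ha : T.IsRoot a)
    (hb : T.IsRoot b) : ∃ W, T = (X - C a) * (X - C b) * W :=
  (isCoprime_X_sub_C_of_isUnit_sub (sub_ne_zero.mpr hab).isUnit).mul_dvd
    (dvd_iff_isRoot.mpr ha) (dvd_iff_isRoot.mpr hb)

variable {T P : K[X]} {m : ℕ}

theorem sub_one_mul_eval_eq (hP : P.natDegree ≤ m) (h : (X - 1) * T = X * P - P.reflect m)
    {t : K} (ht : t ≠ 0) : (t - 1) * T.eval t = t * P.eval t - t ^ m * P.eval t⁻¹ := by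
  simpa [eval_reflect_of_ne_zero hP ht] using congrArg (eval t) h

theorem mul_eval_eq_of_isRoot (hP : P.natDegree ≤ m) (h : (X - 1) * T = X * P - P.reflect m)
    {t : K} (ht : t ≠ 0) (hT : T.IsRoot t) : t * P.eval t = t ^ m * P.eval t⁻¹ := by
  have key := sub_one_mul_eval_eq hP h ht
  rw [hT.eq_zero, mul_zero] at key
  exact sub_eq_zero.mp key.symm

theorem isRoot_inv_of_isRoot (hP : P.natDegree ≤ m) (h : (X - 1) * T = X * P - P.reflect m)
    {t : K} (ht0 : t ≠ 0) (ht1 : t ≠ 1) (hT : T.IsRoot t) : T.IsRoot t⁻¹ := by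
  have key := sub_one_mul_eval_eq hP h (inv_ne_zero ht0)
  have hPt := mul_eval_eq_of_isRoot hP h ht0 hT
  rw [inv_inv] at key
  have hrhs : t⁻¹ * P.eval t⁻¹ - t⁻¹ ^ m * P.eval t = 0 := by
    have hu : t⁻¹ ^ m * t ^ m = 1 := by rw [← mul_pow, inv_mul_cancel₀ ht0, one_pow]
    have hw : t⁻¹ * t = 1 := inv_mul_cancel₀ ht0
    linear_combination (-(t⁻¹ * t⁻¹ ^ m)) * hPt - t⁻¹ * P.eval t⁻¹ * hu + t⁻¹ ^ m * P.eval t * hw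
  rw [hrhs] at key
  exact (mul_eq_zero.mp key).resolve_left (sub_ne_zero.mpr (inv_ne_one.mpr ht1))

theorem eval_neg_one_eq [NeZero (2 : K)] (hP : P.natDegree ≤ m)
    (h : (X - 1) * T = X * P - P.reflect m) (hT : ¬T.IsRoot (-1)) :
    P.eval (-1) = T.eval (-1) := by
  have key := sub_one_mul_eval_eq hP h (neg_ne_zero.mpr one_ne_zero)
  rw [inv_neg, inv_one] at key
  rcases neg_one_pow_eq_or K m with hm | hm
  · rw [hm] at key
    have : (2 : K) * (P.eval (-1) - T.eval (-1)) = 0 := by linear_combination key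
    exact sub_eq_zero.mp ((mul_eq_zero.mp this).resolve_left two_ne_zero)
  · rw [hm] at key
    have : (2 : K) * T.eval (-1) = 0 := by linear_combination -key
    exact absurd ((mul_eq_zero.mp this).resolve_left two_ne_zero) hT

end Field

theorem eq_inv_or_eq_of_isRoot {K : Type*} [Field K] [LinearOrder K] [IsStrictOrderedRing K]
    {T : K[X]} {β : K} (hout : ∀ t : K, T.IsRoot t → 1 < |t| → t = β)
    (hinv : ∀ t : K, t ≠ 0 → t ≠ 1 → T.IsRoot t → T.IsRoot t⁻¹)
    (h0 : ¬T.IsRoot 0) (h1 : ¬T.IsRoot 1) (hm1 : ¬T.IsRoot (-1)) {t : K} (ht : T.IsRoot t) :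
    t = β⁻¹ ∨ t = β := by
  have ht0 : t ≠ 0 := by rintro rfl; exact h0 ht
  rcases lt_or_ge 1 |t| with habs | habs
  · exact .inr (hout t ht habs)
  · have habs' : |t| < 1 := habs.lt_of_ne fun h => by
      rcases abs_eq zero_le_one |>.mp h with rfl | rfl
      exacts [h1 ht, hm1 ht]
    have ht1 : t ≠ 1 := by rintro rfl; exact h1 ht
    refine .inl (inv_eq_iff_eq_inv.mp (hout t⁻¹ (hinv t ht0 ht1 ht) ?_))
    rw [abs_inv]
    exact one_lt_inv_iff₀.mpr ⟨abs_pos.mpr ht0, habs'⟩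

theorem Separable.eval_mul_eval_derivative_of_roots_eq_pair {T : ℝ[X]} (hT : T.Separable)
    {a b c : ℝ} (hca : c < a) (hab : a < b) (ha : T.IsRoot a) (hb : T.IsRoot b)
    (hroots : ∀ t, T.IsRoot t → t = a ∨ t = b) :
    T.eval c * (derivative T).eval a < 0 ∧ 0 < T.eval c * (derivative T).eval b := by
  obtain ⟨W, rfl⟩ := exists_eq_X_sub_C_mul_X_sub_C_mul hab.ne ha hb
  have hda : (derivative ((X - C a) * (X - C b) * W)).eval a = (a - b) * W.eval a := by
    simp [derivative_mul]
  have hdb : (derivative ((X - C a) * (X - C b) * W)).eval b = (b - a) * W.eval b := by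
    simp [derivative_mul]
  have hW0 : ∀ t ∈ Set.univ, W.eval t ≠ 0 := by
    intro t _ hWt
    have hd := hT.aeval_derivative_ne_zero (x := t)
    simp only [coe_aeval_eq_eval] at hd
    rcases hroots t (by simp [hWt]) with rfl | rfl
    · exact hd (by simp [hWt]) (by rw [hda, hWt, mul_zero])
    · exact hd (by simp [hWt]) (by rw [hdb, hWt, mul_zero])
  have hsign : ∀ x y, 0 < W.eval x * W.eval y := fun x y =>
    isPreconnected_univ.mul_pos_of_forall_ne_zero W.continuousOn hW0 trivial trivial
  have hc : 0 < (c - a) * (c - b) := mul_pos_of_neg_of_neg (by linarith) (by linarith)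
  simp only [eval_mul, eval_sub, eval_X, eval_C, hda, hdb]
  constructor
  · calc _ = (c - a) * (c - b) * (a - b) * (W.eval c * W.eval a) := by ring
      _ < 0 := mul_neg_of_neg_of_pos (mul_neg_of_pos_of_neg hc (by linarith)) (hsign _ _)
  · calc 0 < (c - a) * (c - b) * (b - a) * (W.eval c * W.eval b) :=
          mul_pos (mul_pos hc (by linarith)) (hsign _ _)
      _ = _ := by ring

theorem IsRoot.aeval_ofReal_eq_zero {p : ℝ[X]} {t : ℝ} (ht : p.IsRoot t) :
    aeval (t : ℂ) p = 0 :=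
  (aeval_ofReal p t).trans <| by simp [ht.eq_zero]

theorem eval_mul_eval_pos_of_roots_one_lt_norm {P : ℝ[X]}
    (hP : ∀ z : ℂ, aeval z P = 0 → 1 < ‖z‖) {x y : ℝ} (hx : x ∈ Set.Icc (-1) 1)
    (hy : y ∈ Set.Icc (-1) 1) : 0 < P.eval x * P.eval y := by
  refine isPreconnected_Icc.mul_pos_of_forall_ne_zero P.continuousOn (fun t ht hPt => ?_) hx hy
  have := hP t (IsRoot.aeval_ofReal_eq_zero hPt)
  rw [Complex.norm_real, Real.norm_eq_abs] at this
  exact not_lt.mpr (abs_le.mpr ht) this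

end Polynomial

theorem sign_conditions_at_beta_general
    (T : ℤ[X]) (m : ℕ) (hm : 4 ≤ m)
    (hTirr : Irreducible T) (hTdeg : T.natDegree = m)
    (β : ℝ) (hβ : 1 < β) (hβroot : aeval β T = 0)
    (houtside : ∀ z : ℂ, aeval z T = 0 → 1 < ‖z‖ → z = (β : ℂ))
    (P : ℝ[X]) (hPdeg : P.natDegree = m)
    (hPexp : ∀ z : ℂ, aeval z P = 0 → 1 < ‖z‖)
    (hassoc : (X - 1) * T.map (Int.castRingHom ℝ) = X * P - P.reflect m) :
    P.eval (1 / β) * (derivative (T.map (Int.castRingHom ℝ))).eval (1 / β) < 0 ∧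
      0 < P.eval β * (derivative (T.map (Int.castRingHom ℝ))).eval β := by
  set Tr := T.map (Int.castRingHom ℝ)
  have hP : P.natDegree ≤ m := hPdeg.le
  have hβ0 : 0 < β := zero_lt_one.trans hβ
  have hβinv : β⁻¹ < 1 := inv_lt_one_of_one_lt₀ hβ
  have hTr : ∀ {A : Type} [CommRing A] [Algebra ℝ A] (z : A), aeval z Tr = aeval z T := fun z => by
    simp only [Tr, ← algebraMap_int_eq, aeval_map_algebraMap]
  have hint : ∀ c : ℤ, ¬Tr.IsRoot c := hTirr.not_isRoot_map_intCastRingHom (by omega)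
  have hTrβ : Tr.IsRoot β := by rwa [IsRoot, ← coe_aeval_eq_eval, hTr]
  have hout : ∀ t : ℝ, Tr.IsRoot t → 1 < |t| → t = β := fun t ht habs => by
    exact_mod_cast houtside t (by rw [← hTr]; exact ht.aeval_ofReal_eq_zero)
      (by rwa [Complex.norm_real, Real.norm_eq_abs])
  have hroots : ∀ t, Tr.IsRoot t → t = β⁻¹ ∨ t = β := fun t =>
    eq_inv_or_eq_of_isRoot hout (fun t ht0 ht1 => isRoot_inv_of_isRoot hP hassoc ht0 ht1)
      (by exact_mod_cast hint 0) (by exact_mod_cast hint 1) (by exact_mod_cast hint (-1))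
  obtain ⟨hneg, hpos⟩ :=
    (hTirr.separable_map_intCastRingHom (by omega)).eval_mul_eval_derivative_of_roots_eq_pair
      (neg_one_lt_zero.trans (inv_pos.mpr hβ0)) (hβinv.trans hβ)
      (isRoot_inv_of_isRoot hP hassoc hβ0.ne' hβ.ne' hTrβ) hTrβ hroots
  have hPsign : 0 < P.eval β⁻¹ * Tr.eval (-1) := by
    rw [← eval_neg_one_eq hP hassoc (by exact_mod_cast hint (-1))]
    exact eval_mul_eval_pos_of_roots_one_lt_norm hPexp
      ⟨by linarith [inv_pos.mpr hβ0], hβinv.le⟩ ⟨le_rfl, by norm_num⟩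
  have hPβ : 0 < β * (P.eval β * (derivative Tr).eval β) := by
    rw [← mul_assoc, mul_eval_eq_of_isRoot hP hassoc hβ0.ne' hTrβ, mul_assoc]
    exact mul_pos (pow_pos hβ0 m) (mul_pos_of_mul_pos_of_mul_pos hPsign hpos)
  rw [one_div]
  refine ⟨?_, pos_of_mul_pos_right hPβ hβ0.le⟩
  rw [← neg_pos, ← mul_neg]
  exact mul_pos_of_mul_pos_of_mul_pos hPsign (by rwa [mul_neg, neg_pos])

/-- Let `T ∈ ℤ[z]` be an irreducible Salem polynomial of degree `m ≥ 4` with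
dominant root `β > 1`, and let `P ∈ ℝ[z]` be an expansive polynomial of degree
`m` with `(z-1)T(z) = zP(z) - P*(z)` (where `T` is viewed in `ℝ[z]`). Then
`P(1/β) T'(1/β) < 0` and `P(β) T'(β) > 0`. -/
theorem sign_conditions_at_beta
    (T : ℤ[X]) (m : ℕ) (hm : 4 ≤ m)
    (hTmonic : T.Monic) (hTirr : Irreducible T) (hTdeg : T.natDegree = m)
    (β : ℝ) (hβ : 1 < β) (hβroot : aeval β T = 0)
    (houtside : ∀ z : ℂ, aeval z T = 0 → 1 < ‖z‖ → z = (β : ℂ))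
    (honcircle : ∃ z : ℂ, aeval z T = 0 ∧ ‖z‖ = 1)
    (P : ℝ[X]) (hPdeg : P.natDegree = m)
    (hPexp : ∀ z : ℂ, aeval z P = 0 → 1 < ‖z‖)
    (hassoc : (X - 1) * T.map (Int.castRingHom ℝ) = X * P - P.reflect m) :
    P.eval (1 / β) * (derivative (T.map (Int.castRingHom ℝ))).eval (1 / β) < 0 ∧
      0 < P.eval β * (derivative (T.map (Int.castRingHom ℝ))).eval β :=
  sign_conditions_at_beta_general T m hm hTirr hTdeg β hβ hβroot houtside P hPdeg hPexp hassoc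
end

section
/- Let T be an irreducible Salem polynomial of degree m ≥ 4 and let P ∈ ℝ[z] of degree m satisfy (z-1)T(z) = zP(z) - P*(z). If P is expansive then P(1)·T(1) < 0. -/
/-!
A monic irreducible `T ∈ ℤ[X]` with an integer root `c` equals `X - c`; as `β > 1` is a root,
`T(±1) ≠ 0`. At `z = -1` the identity reads `-2 T(-1) = -(1 + (-1)^m) P(-1)`, so `m` is even
and `P(-1) = T(-1)`. The only real root of `T` off `[-1, 1]` is `β`, so `T`, monic of even
degree, is positive on `(-∞, -1]`; hence `P(-1) > 0`, and since the expansive `P` has no root in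
`[-1, 1]`, also `P(1) > 0`. Finally `β` is a simple root with `T > 0` on `(β, ∞)` and no root of
`T` in `[1, β)`, so `T(1) < 0`.
-/

open Polynomial Filter Set

namespace Polynomial

theorem Monic.eq_algebraMap_of_irreducible_of_isRoot {R S : Type*} [CommRing R] [IsDomain R]
    [CommRing S] [Algebra R S] {p : R[X]} (hp : p.Monic) (hirr : Irreducible p) {c : R}
    (hc : p.IsRoot c) {x : S} (hx : aeval x p = 0) : x = algebraMap R S c := by
  have hdeg : p.natDegree = 1 :=
    natDegree_eq_of_degree_eq_some (degree_eq_one_of_irreducible_of_root hirr hc)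
  rw [hp.eq_X_add_C hdeg] at hc hx
  have hc0 : p.coeff 0 = -c := by simpa [add_eq_zero_iff_eq_neg'] using hc
  simpa [hc0, add_eq_zero_iff_eq_neg] using hx

theorem aeval_ofReal_eq_zero_iff {R : Type*} [CommSemiring R] [Algebra R ℝ] [Algebra R ℂ]
    [IsScalarTower R ℝ ℂ] (p : R[X]) (x : ℝ) : aeval (x : ℂ) p = 0 ↔ aeval x p = 0 := by
  rw [← Complex.coe_algebraMap, aeval_algebraMap_apply,
    map_eq_zero_iff _ (algebraMap ℝ ℂ).injective]

theorem Monic.eventually_eval_pos {p : ℝ[X]} (hp : p.Monic) : ∀ᶠ x in atTop, 0 < p.eval x := by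
  rcases eq_or_ne p.natDegree 0 with h | h
  · simp [hp.natDegree_eq_zero.mp h]
  · exact (p.tendsto_atTop_of_leadingCoeff_nonneg (natDegree_pos_iff_degree_pos.mp (by omega))
      (by simp [hp.leadingCoeff])).eventually_gt_atTop 0

theorem Monic.eval_pos_of_forall_ge_ne_zero {p : ℝ[X]} (hp : p.Monic) {a : ℝ}
    (h : ∀ x, a ≤ x → p.eval x ≠ 0) : 0 < p.eval a := by
  obtain ⟨b, hb, hab⟩ := (hp.eventually_eval_pos.and (eventually_ge_atTop a)).exists
  exact isPreconnected_Ici.lt_of_ne p.continuous.continuousOn h ⟨b, hab, hb⟩ self_mem_Ici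

theorem eval_neg_of_squarefree_of_isRoot {p : ℝ[X]} (hp : Squarefree p) {a b : ℝ} (hab : a < b)
    (hb : p.IsRoot b) (hpos : ∀ x, b < x → 0 < p.eval x) (hne : ∀ x ∈ Ico a b, p.eval x ≠ 0) :
    p.eval a < 0 := by
  obtain ⟨q, rfl⟩ := dvd_iff_isRoot.mpr hb
  have hqb : q.eval b ≠ 0 := by
    intro h
    obtain ⟨r, rfl⟩ := dvd_iff_isRoot.mpr h
    exact not_isUnit_X_sub_C b (hp _ ⟨r, by ring⟩)
  have hqpos : ∀ x, b < x → 0 < q.eval x := fun x hx ↦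
    pos_of_mul_pos_right (by simpa using hpos x hx) (by simpa using hx.le)
  have hqne : ∀ x ∈ Ici a, q.eval x ≠ 0 := by
    intro x hx
    rcases lt_trichotomy x b with hxb | rfl | hxb
    · exact right_ne_zero_of_mul (by simpa using hne x ⟨hx, hxb⟩)
    · exact hqb
    · exact (hqpos x hxb).ne'
  have hqa : 0 < q.eval a := isPreconnected_Ici.lt_of_ne q.continuous.continuousOn hqne
    ⟨b + 1, mem_Ici.2 (by linarith), hqpos _ (by linarith)⟩ self_mem_Ici
  simpa using mul_neg_of_neg_of_pos (sub_neg.mpr hab) hqa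

theorem even_and_eval_neg_one_eq {K : Type*} [Field K] [CharZero K] {T P : K[X]} {m : ℕ}
    (hP : P.natDegree ≤ m) (h : (X - 1) * T = X * P - P.reflect m) (hT : T.eval (-1) ≠ 0) :
    Even m ∧ P.eval (-1) = T.eval (-1) := by
  have : Invertible (-1 : K) := invertibleOfNonzero (by norm_num)
  have hrefl := eval₂_reflect_mul_pow (RingHom.id K) (-1) m P hP
  have hrefl' : (P.reflect m).eval (-1) * (-1) ^ m = P.eval (-1) := by
    simpa [invOf_eq_inv] using hrefl
  have h1 := congrArg (eval (-1)) h
  simp only [eval_mul, eval_sub, eval_X, eval_one] at h1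
  rcases Nat.even_or_odd m with hm | hm
  · rw [hm.neg_one_pow, mul_one] at hrefl'
    refine ⟨hm, ?_⟩
    rw [hrefl'] at h1
    linear_combination h1 / 2
  · rw [hm.neg_one_pow] at hrefl'
    exact absurd (by linear_combination -h1 / 2 - hrefl' / 2) hT

theorem Monic.eval_pos_of_forall_le_ne_zero {p : ℝ[X]} (hp : p.Monic) (heven : Even p.natDegree)
    {a : ℝ} (h : ∀ x ≤ a, p.eval x ≠ 0) : 0 < p.eval a := by
  have hmonic : (p.comp (-X)).Monic := by
    simpa [heven.neg_one_pow] using hp.neg_one_pow_natDegree_mul_comp_neg_X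
  simpa using hmonic.eval_pos_of_forall_ge_ne_zero (a := -a) fun x hx ↦ by
    simpa using h (-x) (by linarith)

theorem squarefree_map_of_irreducible {K : Type*} [Field K] [CharZero K] {T : ℤ[X]}
    (hT : T.Monic) (hirr : Irreducible T) : Squarefree (T.map (Int.castRingHom K)) := by
  have hsep : (T.map (Int.castRingHom ℚ)).Separable :=
    (hT.irreducible_iff_irreducible_map_fraction_map.mp hirr).separable
  have hsep' := hsep.map (f := algebraMap ℚ K)
  rw [Polynomial.map_map, RingHom.ext_int ((algebraMap ℚ K).comp _) (Int.castRingHom K)] at hsep'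
  exact hsep'.squarefree

theorem Monic.eval_one_neg {p : ℝ[X]} (hp : p.Monic) (hsq : Squarefree p) {β : ℝ} (hβ : 1 < β)
    (hβroot : p.IsRoot β) (hroots : ∀ x, p.eval x = 0 → 1 < |x| → x = β) (h1 : p.eval 1 ≠ 0) :
    p.eval 1 < 0 := by
  refine eval_neg_of_squarefree_of_isRoot hsq hβ hβroot
    (fun x hx ↦ hp.eval_pos_of_forall_ge_ne_zero fun y hy h0 ↦ ?_) fun x hx h0 ↦ ?_
  · have := hroots y h0 (by rw [abs_of_pos] <;> linarith)
    linarith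
  · rcases hx.1.eq_or_lt with rfl | hx1
    · exact h1 h0
    · have := hroots x h0 (by rwa [abs_of_pos (by linarith)])
      exact hx.2.ne this

theorem Monic.eval_neg_one_pos {p : ℝ[X]} (hp : p.Monic) (heven : Even p.natDegree) {β : ℝ}
    (hβ : 0 < β) (hroots : ∀ x, p.eval x = 0 → 1 < |x| → x = β) (h1 : p.eval (-1) ≠ 0) :
    0 < p.eval (-1) := by
  refine hp.eval_pos_of_forall_le_ne_zero heven fun x hx h0 ↦ ?_
  rcases hx.eq_or_lt with rfl | hx1
  · exact h1 h0
  · have := hroots x h0 (by rw [abs_of_neg] <;> linarith)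
    linarith

end Polynomial

theorem P_one_T_one_neg_general
    (T : ℤ[X]) (m : ℕ)
    (hTmonic : T.Monic) (hTirr : Irreducible T) (hTdeg : T.natDegree = m)
    (β : ℝ) (hβ : 1 < β) (hβroot : aeval β T = 0)
    (houtside : ∀ z : ℂ, aeval z T = 0 → 1 < ‖z‖ → z = (β : ℂ))
    (P : ℝ[X]) (hPdeg : P.natDegree = m)
    (hassoc : (X - 1) * T.map (Int.castRingHom ℝ) = X * P - P.reflect m)
    (hPexp : ∀ z : ℂ, aeval z P = 0 → 1 < ‖z‖) :
    P.eval 1 * (T.map (Int.castRingHom ℝ)).eval 1 < 0 := by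
  set Tr := T.map (Int.castRingHom ℝ)
  have hTr : Tr.Monic := hTmonic.map _
  have haeval : ∀ x : ℝ, aeval x T = Tr.eval x := fun x ↦ by
    rw [aeval_def, eval₂_eq_eval_map, algebraMap_int_eq]
  have hTrβ : Tr.IsRoot β := by rwa [IsRoot, ← haeval]
  have hroots : ∀ x : ℝ, Tr.eval x = 0 → 1 < |x| → x = β := fun x hx hx1 ↦ by
    exact_mod_cast houtside x ((aeval_ofReal_eq_zero_iff T x).2 (by rwa [haeval]))
      (by simpa using hx1)
  have hTr_intCast : ∀ c : ℤ, (c : ℝ) ≠ β → Tr.eval (c : ℝ) ≠ 0 := fun c hc h0 ↦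
    hc (hTmonic.eq_algebraMap_of_irreducible_of_isRoot hTirr (by simpa [Tr, eval_map] using h0)
      hβroot).symm
  have hT_neg_one : Tr.eval (-1) ≠ 0 := by simpa using hTr_intCast (-1) (by push_cast; linarith)
  obtain ⟨hm, hP⟩ := even_and_eval_neg_one_eq hPdeg.le hassoc hT_neg_one
  have hT_neg_one_pos : 0 < Tr.eval (-1) :=
    hTr.eval_neg_one_pos (by rwa [hTmonic.natDegree_map, hTdeg]) (by linarith) hroots hT_neg_one
  have hP_one_pos : 0 < P.eval 1 := by
    refine isPreconnected_Icc.lt_of_ne P.continuous.continuousOn (fun x hx h0 ↦ ?_)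
      ⟨-1, left_mem_Icc.2 (by norm_num), hP ▸ hT_neg_one_pos⟩ (right_mem_Icc.2 (by norm_num))
    have := hPexp x ((aeval_ofReal_eq_zero_iff P x).2 (by simpa using h0))
    rw [Complex.norm_real, Real.norm_eq_abs] at this
    exact this.not_ge (abs_le.2 hx)
  have hT_one_neg : Tr.eval 1 < 0 :=
    hTr.eval_one_neg (squarefree_map_of_irreducible hTmonic hTirr) hβ hTrβ hroots
      (by simpa using hTr_intCast 1 (by push_cast; linarith))
  exact mul_neg_of_pos_of_neg hP_one_pos hT_one_neg

/-- Let `T ∈ ℤ[z]` be an irreducible Salem polynomial of degree `m ≥ 4` and let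
`P ∈ ℝ[z]` of degree `m` satisfy `(z-1)T(z) = zP(z) - P*(z)`. If `P` is
expansive then `P(1) T(1) < 0`. -/
theorem P_one_T_one_neg
    (T : ℤ[X]) (m : ℕ) (hm : 4 ≤ m)
    (hTmonic : T.Monic) (hTirr : Irreducible T) (hTdeg : T.natDegree = m)
    (β : ℝ) (hβ : 1 < β) (hβroot : aeval β T = 0)
    (houtside : ∀ z : ℂ, aeval z T = 0 → 1 < ‖z‖ → z = (β : ℂ))
    (honcircle : ∃ z : ℂ, aeval z T = 0 ∧ ‖z‖ = 1)
    (P : ℝ[X]) (hPdeg : P.natDegree = m)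
    (hassoc : (X - 1) * T.map (Int.castRingHom ℝ) = X * P - P.reflect m)
    (hPexp : ∀ z : ℂ, aeval z P = 0 → 1 < ‖z‖) :
    P.eval 1 * (T.map (Int.castRingHom ℝ)).eval 1 < 0 :=
  P_one_T_one_neg_general T m hTmonic hTirr hTdeg β hβ hβroot houtside P hPdeg hassoc hPexp
end

section
/- Let H(z) = h_0 + h_1 z + ... + h_m z^m ∈ ℝ[z] be a Hurwitz polynomial (all roots with negative real part, h_0 > 0). Then the numerator N(z) = Σ_{i≥0} h_{2i+1} z^i and denominator D(z) = Σ_{i≥0} h_{2i} z^i of the Hurwitz alternant have no common complex root. -/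
open Polynomial Finset

lemma even_odd_split (f : ℕ → ℂ) (n : ℕ) :
    ∑ k ∈ range (2 * n), f k = ∑ i ∈ range n, (f (2 * i) + f (2 * i + 1)) := by
  induction n with
  | zero => simp
  | succ n ih =>
      have : 2 * (n + 1) = (2 * n + 1) + 1 := by ring
      rw [this, Finset.sum_range_succ, Finset.sum_range_succ, ih, Finset.sum_range_succ,
        add_assoc]

/-- If `H(z) = h_0 + h_1 z + ⋯ + h_m z^m ∈ ℝ[z]` is a Hurwitz polynomial (all
roots with strictly negative real part, `h_0 > 0`, degree `m ≥ 1`), then the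
numerator `N(z) = ∑ h_{2i+1} z^i` and denominator `D(z) = ∑ h_{2i} z^i` of the
Hurwitz alternant have no common complex root. -/
theorem hurwitz_alternant_coprime
    (H : ℝ[X]) (m : ℕ) (hm : 1 ≤ m) (hdeg : H.natDegree = m)
    (h0 : 0 < H.coeff 0)
    (hHurwitz : ∀ z : ℂ, aeval z H = 0 → z.re < 0)
    (N D : ℝ[X])
    (hN : N = ∑ i ∈ range (m + 1), C (H.coeff (2 * i + 1)) * X ^ i)
    (hD : D = ∑ i ∈ range (m + 1), C (H.coeff (2 * i)) * X ^ i) :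
    ∀ z : ℂ, ¬(aeval z N = 0 ∧ aeval z D = 0) := by
  rintro z ⟨hNz, hDz⟩
  have key : ∀ w : ℂ, aeval w H = aeval (w ^ 2) D + w * aeval (w ^ 2) N := by
    intro w
    have hlt : H.natDegree < 2 * (m + 1) := by omega
    rw [Polynomial.aeval_eq_sum_range' hlt, even_odd_split, hD, hN, map_sum, map_sum]
    rw [Finset.mul_sum, ← Finset.sum_add_distrib]
    apply Finset.sum_congr rfl
    intro i _
    simp only [map_mul, map_pow, aeval_C, aeval_X, Algebra.smul_def]
    rw [pow_mul]
    ring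
  obtain ⟨w, hw⟩ := IsAlgClosed.exists_pow_nat_eq z (n := 2) (by norm_num)
  have h1 : aeval w H = 0 := by rw [key, hw, hNz, hDz]; ring
  have h2 : aeval (-w) H = 0 := by rw [key, neg_pow, hw]; simp [hNz, hDz]
  have := hHurwitz w h1
  have := hHurwitz (-w) h2
  simp only [Complex.neg_re] at *
  linarith
end
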